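/- arXiv:1005.5604 — 6 statements merged into one kernel-verified Lean document; each statement's English description precedes it below -/
import Mathlib

section
/- For every τ > 0, n ≥ 1, and 0 < σ, one has Σ_{k ∈ ℤⁿ \ {0}} |k|^τ e^{−|k|σ} ≤ (4ⁿ/(n−1)!) · σ^{−τ−n} e^{nσ} Γ(τ+n), where |k| is the ℓ¹-norm on ℤⁿ. -/
/-!
Group the lattice points by `m = |k|₁`. A point is determined by its sign pattern and the vector
of absolute values, so the sphere `|k|₁ = m` has at most `2ⁿ · C(n+m-1, m)` points, and
`C(n+m-1, m) = C(n+m-1, n-1) ≤ (n+m-1)ⁿ⁻¹ / (n-1)!`. With `s = τ + n` and `N = n + m - 1`, the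
`m`-th term is then at most `e^{nσ}/(n-1)! · N^{s-1} e^{-σ(N+1)}`, which is bounded by
`e^{nσ}/(n-1)!` times the integral of `x^{s-1} e^{-σx}` over `[N, N+1]`. These intervals tile
`[n-1, ∞)`, so the sum is at most `2ⁿ e^{nσ}/(n-1)! · σ^{-s} Γ(s)`.
-/

open Set MeasureTheory Finset
open scoped ENNReal Nat

lemma integrableOn_rpow_mul_exp_neg_mul_Ioi {s σ : ℝ} (hs : -1 < s) (hσ : 0 < σ) :
    IntegrableOn (fun x : ℝ => x ^ s * Real.exp (-(σ * x))) (Ioi 0) := by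
  simpa using integrableOn_rpow_mul_exp_neg_mul_rpow hs one_pos hσ

lemma rpow_mul_exp_neg_mul_le_integral {a p σ : ℝ} (ha : 0 ≤ a) (hp : 0 ≤ p) (hσ : 0 ≤ σ) :
    a ^ p * Real.exp (-(σ * (a + 1))) ≤ ∫ x in a..a + 1, x ^ p * Real.exp (-(σ * x)) := by
  have hcont : Continuous fun x : ℝ => x ^ p * Real.exp (-(σ * x)) := by
    have := Real.continuous_rpow_const hp
    fun_prop
  calc a ^ p * Real.exp (-(σ * (a + 1)))
      = ∫ _ in a..a + 1, a ^ p * Real.exp (-(σ * (a + 1))) := by simp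
    _ ≤ _ := by
      refine intervalIntegral.integral_mono_on (by linarith) intervalIntegrable_const
        (hcont.intervalIntegrable _ _) fun x hx => ?_
      exact mul_le_mul (Real.rpow_le_rpow ha hx.1 hp)
        (Real.exp_le_exp.2 (by nlinarith [hx.2])) (Real.exp_pos _).le
        (Real.rpow_nonneg (ha.trans hx.1) p)

lemma sum_range_intervalIntegral_le_integral_Ioi {g : ℝ → ℝ} {a b : ℝ} (hba : b ≤ a)
    (hg : IntegrableOn g (Ioi b)) (hg₀ : ∀ x ∈ Ioi b, 0 ≤ g x) (M : ℕ) :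
    ∑ m ∈ range M, ∫ x in a + m..a + m + 1, g x ≤ ∫ x in Ioi b, g x := by
  have hsub : Ioc a (a + M) ⊆ Ioi b := fun x hx => hba.trans_lt hx.1
  have hadj : ∀ m < M, IntervalIntegrable g volume (a + m) (a + (m + 1 : ℕ)) := fun m _ =>
    (intervalIntegrable_iff_integrableOn_Ioc_of_le (by push_cast; linarith)).2 <|
      hg.mono_set fun x hx => hba.trans_lt ((le_add_of_nonneg_right m.cast_nonneg).trans_lt hx.1)
  calc ∑ m ∈ range M, ∫ x in a + m..a + m + 1, g x
      = ∫ x in a + (0 : ℕ)..a + (M : ℕ), g x := by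
        rw [← intervalIntegral.sum_integral_adjacent_intervals hadj]
        push_cast
        simp only [add_assoc]
    _ ≤ ∫ x in Ioi b, g x := by
        rw [Nat.cast_zero, add_zero, intervalIntegral.integral_of_le (by simp)]
        exact setIntegral_mono_set hg ((ae_restrict_iff' measurableSet_Ioi).2 (.of_forall hg₀))
          hsub.eventuallyLE

lemma tsum_comp_natAbs_le {ι : Type*} [Fintype ι] [DecidableEq ι] (g : (ι → ℕ) → ℝ≥0∞) :
    ∑' k : ι → ℤ, g (fun i => (k i).natAbs) ≤ 2 ^ Fintype.card ι * ∑' a : ι → ℕ, g a := by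
  have hinj : Function.Injective fun k : ι → ℤ =>
      (fun i => decide (0 ≤ k i), fun i => (k i).natAbs) := by
    intro k k' h
    simp only [Prod.mk.injEq, funext_iff, decide_eq_decide] at h
    funext i
    have := h.1 i
    have := h.2 i
    omega
  calc ∑' k : ι → ℤ, g (fun i => (k i).natAbs)
      ≤ ∑' p : (ι → Bool) × (ι → ℕ), g p.2 :=
        ENNReal.tsum_comp_le_tsum_of_injective hinj fun p => g p.2
    _ = 2 ^ Fintype.card ι * ∑' a : ι → ℕ, g a := by
        simp [ENNReal.tsum_prod', tsum_fintype]

lemma tsum_comp_sum_eq_tsum_choose_mul {ι : Type*} [Fintype ι] [DecidableEq ι] (h : ℕ → ℝ≥0∞) :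
    ∑' a : ι → ℕ, h (∑ i, a i) = ∑' m, ((Fintype.card ι + m - 1).choose m : ℝ≥0∞) * h m := by
  rw [← (Equiv.sigmaFiberEquiv fun a : ι → ℕ => ∑ i, a i).tsum_eq, ENNReal.tsum_sigma']
  refine tsum_congr fun m => ?_
  have e := Sym.equivNatSumOfFintype ι m
  let : Fintype {a : ι → ℕ // ∑ i, a i = m} := Fintype.ofEquiv _ e
  calc ∑' a : {a : ι → ℕ // ∑ i, a i = m}, h (∑ i, (a : ι → ℕ) i)
      = ∑' _ : {a : ι → ℕ // ∑ i, a i = m}, h m := tsum_congr fun a => by rw [a.2]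
    _ = _ := by
      rw [tsum_fintype, sum_const, card_univ, nsmul_eq_mul, ← Fintype.card_congr e,
        Sym.card_sym_eq_choose]

lemma choose_mul_rpow_mul_exp_le_integral {n : ℕ} (hn : 1 ≤ n) {τ σ : ℝ} (hτ : 0 < τ)
    (hσ : 0 ≤ σ) (m : ℕ) :
    ((n + m - 1).choose m : ℝ) * ((m : ℝ) ^ τ * Real.exp (-(m : ℝ) * σ)) ≤
      Real.exp (n * σ) / (n - 1)! *
        ∫ x in ((n - 1 : ℕ) : ℝ) + m..((n - 1 : ℕ) : ℝ) + m + 1,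
          x ^ (τ + n - 1) * Real.exp (-(σ * x)) := by
  set N := n - 1 + m with hN
  have hNcast : ((n - 1 : ℕ) : ℝ) + m = N := by push_cast [hN]; rfl
  have hNn : (N : ℝ) + 1 = n + m := by rw [← hNcast, Nat.cast_sub hn]; push_cast; ring
  have hchoose : ((n + m - 1).choose m : ℝ) ≤ (N : ℝ) ^ (n - 1) / (n - 1)! := by
    rw [show n + m - 1 = N by omega, Nat.choose_symm_of_eq_add (show N = m + (n - 1) by omega)]
    exact Nat.choose_le_pow_div (n - 1) N
  have hpow : (m : ℝ) ^ τ ≤ (N : ℝ) ^ τ :=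
    Real.rpow_le_rpow m.cast_nonneg (by exact_mod_cast Nat.le_add_left m (n - 1)) hτ.le
  have hexp : Real.exp (-(m : ℝ) * σ) = Real.exp (n * σ) * Real.exp (-(σ * (N + 1))) := by
    rw [← Real.exp_add, hNn]; ring_nf
  have hrpow : (N : ℝ) ^ (n - 1) * (N : ℝ) ^ τ = (N : ℝ) ^ (τ + n - 1) := by
    rw [← Real.rpow_natCast, ← Real.rpow_add' N.cast_nonneg (by positivity), Nat.cast_sub hn]
    ring_nf
  calc ((n + m - 1).choose m : ℝ) * ((m : ℝ) ^ τ * Real.exp (-(m : ℝ) * σ))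
      ≤ (N : ℝ) ^ (n - 1) / (n - 1)! * ((N : ℝ) ^ τ * Real.exp (-(m : ℝ) * σ)) := by
        gcongr
    _ = Real.exp (n * σ) / (n - 1)! * ((N : ℝ) ^ (τ + n - 1) * Real.exp (-(σ * (N + 1)))) := by
        rw [← hrpow, hexp]; ring
    _ ≤ _ := by
        rw [hNcast]
        gcongr
        have hn' : (1 : ℝ) ≤ n := Nat.one_le_cast.2 hn
        exact rpow_mul_exp_neg_mul_le_integral N.cast_nonneg (by linarith) hσ

lemma sum_range_choose_mul_rpow_mul_exp_le {n : ℕ} (hn : 1 ≤ n) {τ σ : ℝ} (hτ : 0 < τ)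
    (hσ : 0 < σ) (M : ℕ) :
    ∑ m ∈ range M, ((n + m - 1).choose m : ℝ) * ((m : ℝ) ^ τ * Real.exp (-(m : ℝ) * σ)) ≤
      Real.exp (n * σ) / (n - 1)! * ((1 / σ) ^ (τ + n) * Real.Gamma (τ + n)) := by
  have hs : 0 < τ + n := by positivity
  calc _ ≤ ∑ m ∈ range M, Real.exp (n * σ) / (n - 1)! *
          ∫ x in ((n - 1 : ℕ) : ℝ) + m..((n - 1 : ℕ) : ℝ) + m + 1,
            x ^ (τ + n - 1) * Real.exp (-(σ * x)) :=
        sum_le_sum fun m _ => choose_mul_rpow_mul_exp_le_integral hn hτ hσ.le m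
    _ ≤ Real.exp (n * σ) / (n - 1)! *
          ∫ x in Ioi 0, x ^ (τ + n - 1) * Real.exp (-(σ * x)) := by
        rw [← mul_sum]
        gcongr
        exact sum_range_intervalIntegral_le_integral_Ioi (Nat.cast_nonneg _)
          (integrableOn_rpow_mul_exp_neg_mul_Ioi (by linarith) hσ)
          (fun x hx => mul_nonneg (Real.rpow_nonneg (le_of_lt hx) _) (Real.exp_pos _).le) M
    _ = _ := by rw [Real.integral_rpow_mul_exp_neg_mul_Ioi hs hσ]

lemma summable_and_tsum_le_of_tsum_ofReal_le {α : Type*} {f : α → ℝ} {B : ℝ}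
    (hf : ∀ a, 0 ≤ f a) (hB : 0 ≤ B) (h : ∑' a, ENNReal.ofReal (f a) ≤ ENNReal.ofReal B) :
    Summable f ∧ ∑' a, f a ≤ B := by
  have hsum : Summable f := by
    simpa only [ENNReal.toReal_ofReal (hf _)] using
      ENNReal.summable_toReal (h.trans_lt ENNReal.ofReal_lt_top).ne
  refine ⟨hsum, ?_⟩
  rwa [← ENNReal.ofReal_tsum_of_nonneg hf hsum, ENNReal.ofReal_le_ofReal_iff hB] at h

lemma ite_sum_abs_rpow_mul_exp_eq {ι : Type*} [Fintype ι] {τ : ℝ} (hτ : τ ≠ 0) (σ : ℝ)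
    (k : ι → ℤ) :
    (if k = 0 then (0 : ℝ)
      else (∑ i, |(k i : ℝ)|) ^ τ * Real.exp (-(∑ i, |(k i : ℝ)|) * σ)) =
      ((∑ i, (k i).natAbs : ℕ) : ℝ) ^ τ * Real.exp (-((∑ i, (k i).natAbs : ℕ) : ℝ) * σ) := by
  have hcast : ∑ i, |(k i : ℝ)| = ((∑ i, (k i).natAbs : ℕ) : ℝ) := by
    push_cast [Nat.cast_natAbs, Int.cast_abs]; rfl
  split_ifs with hk
  · simp [hk, Real.zero_rpow hτ]
  · rw [hcast]

/-- Small-denominator sum estimate: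
`Σ_{k ∈ ℤⁿ \ {0}} |k|₁^τ e^{-|k|₁ σ} ≤ (4ⁿ/(n-1)!) σ^{-τ-n} e^{nσ} Γ(τ+n)`. -/
theorem stmt_4 (n : ℕ) (hn : 1 ≤ n) (τ σ : ℝ) (hτ : 0 < τ) (hσ : 0 < σ) :
    Summable (fun k : Fin n → ℤ =>
      if k = 0 then (0 : ℝ)
      else (∑ i, |(k i : ℝ)|) ^ τ * Real.exp (-(∑ i, |(k i : ℝ)|) * σ)) ∧
    (∑' k : Fin n → ℤ,
      if k = 0 then (0 : ℝ)
      else (∑ i, |(k i : ℝ)|) ^ τ * Real.exp (-(∑ i, |(k i : ℝ)|) * σ))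
      ≤ (4 ^ n / (Nat.factorial (n - 1) : ℝ)) * σ ^ (-(τ + n)) *
          Real.exp (n * σ) * Real.Gamma (τ + n) := by
  set r : ℕ → ℝ := fun m => (m : ℝ) ^ τ * Real.exp (-(m : ℝ) * σ)
  have hr : ∀ m, 0 ≤ r m := fun m => by positivity
  simp_rw [ite_sum_abs_rpow_mul_exp_eq hτ.ne' σ]
  refine summable_and_tsum_le_of_tsum_ofReal_le (fun k => hr _) (by positivity) ?_
  calc ∑' k : Fin n → ℤ, ENNReal.ofReal (r (∑ i, (k i).natAbs))
      ≤ 2 ^ n * ∑' a : Fin n → ℕ, ENNReal.ofReal (r (∑ i, a i)) := by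
        simpa using tsum_comp_natAbs_le fun a : Fin n → ℕ => ENNReal.ofReal (r (∑ i, a i))
    _ = 2 ^ n * ∑' m, ((n + m - 1).choose m : ℝ≥0∞) * ENNReal.ofReal (r m) := by
        rw [tsum_comp_sum_eq_tsum_choose_mul fun m => ENNReal.ofReal (r m), Fintype.card_fin]
    _ ≤ 2 ^ n * ENNReal.ofReal
          (Real.exp (n * σ) / (n - 1)! * ((1 / σ) ^ (τ + n) * Real.Gamma (τ + n))) := by
        gcongr
        refine ENNReal.tsum_le_of_sum_range_le fun M => ?_
        simp_rw [← ENNReal.ofReal_natCast, ← ENNReal.ofReal_mul (Nat.cast_nonneg _)]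
        rw [← ENNReal.ofReal_sum_of_nonneg fun m _ => mul_nonneg (Nat.cast_nonneg _) (hr m)]
        exact ENNReal.ofReal_le_ofReal (sum_range_choose_mul_rpow_mul_exp_le hn hτ hσ M)
    _ ≤ _ := by
        rw [← ENNReal.ofReal_ofNat 2, ← ENNReal.ofReal_pow zero_le_two,
          ← ENNReal.ofReal_mul (by positivity)]
        refine ENNReal.ofReal_le_ofReal ?_
        rw [one_div, Real.inv_rpow hσ.le, ← Real.rpow_neg hσ.le]
        calc _ = 2 ^ n / (n - 1)! * σ ^ (-(τ + n)) * Real.exp (n * σ) * Real.Gamma (τ + n) := by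
              ring
          _ ≤ _ := by gcongr; norm_num
end

section
/- Newton iteration with quadratic error: suppose (a_n)_{n≥0} are nonnegative reals with a_{n+1} ≤ c_n a_n² where c_n = 2^{−1}Cσ_n^{−τ}, σ_n = (σ/6)2^{−n}, each c_n ≥ 1, and a_0 ≤ c_0 ε where ε = (η/2)Π_{k≥0} c_k^{−2^{−k}} satisfies 2εΠ c_k^{2^{−k}} ≤ 1 (i.e. η ≤ 1). Then a_n ≤ (ε Π_{k≥0} c_k^{2^{−k}})^{2ⁿ} for all n ≥ 0 and Σ_{n≥0} a_n ≤ η. -/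
/-!
With `Q m = ∏_{k ≤ m} c_k ^ 2^{-k}`, the quadratic recursion propagates `a m ≤ (ε Q m)^{2^m}`:
squaring doubles the exponent, and the extra factor `c m ≤ c (m+1)` is exactly the new factor
`c (m+1) ^ 2^{-(m+1)}` of `Q (m+1)` raised to `2^{m+1}`. Since `c k = c 0 (2^τ)^k` grows only
geometrically, `∑ 2^{-k} log c k` converges, so `Q m ≤ P` and `ε P = η / 2 ≤ 1/2`. Doubly
exponential decay of `a m ≤ (ε P)^{2^m}` then gives `∑ a m ≤ 2 ε P = η`.
-/

open Real Finset

lemma rpow_two_rpow_neg_pow_two_pow {x : ℝ} (hx : 0 ≤ x) (k : ℕ) :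
    (x ^ (2 : ℝ) ^ (-(k : ℝ))) ^ 2 ^ k = x := by
  rw [← rpow_natCast, ← rpow_mul hx, Nat.cast_pow, Nat.cast_ofNat, ← rpow_natCast 2 k,
    ← rpow_add two_pos, neg_add_cancel, rpow_zero, rpow_one]

lemma le_pow_two_pow_of_le_mul_sq {c a : ℕ → ℝ} {ε : ℝ} (hc : ∀ k, 0 ≤ c k) (hc_mono : Monotone c)
    (ha : ∀ m, 0 ≤ a m) (hrec : ∀ m, a (m + 1) ≤ c m * a m ^ 2) (ha₀ : a 0 ≤ c 0 * ε) (m : ℕ) :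
    a m ≤ (ε * ∏ k ∈ range (m + 1), c k ^ (2 : ℝ) ^ (-(k : ℝ))) ^ 2 ^ m := by
  induction m with
  | zero => simpa [mul_comm] using ha₀
  | succ m ih =>
    set b := ε * ∏ k ∈ range (m + 1), c k ^ (2 : ℝ) ^ (-(k : ℝ))
    calc a (m + 1) ≤ c m * a m ^ 2 := hrec m
      _ ≤ c m * ((b ^ 2 ^ m) ^ 2) := by gcongr; exacts [hc m, ha m]
      _ ≤ c (m + 1) * ((b ^ 2 ^ m) ^ 2) := by gcongr; exact hc_mono m.le_succ
      _ = (b * c (m + 1) ^ (2 : ℝ) ^ (-((m + 1 : ℕ) : ℝ))) ^ 2 ^ (m + 1) := by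
        rw [mul_pow b, rpow_two_rpow_neg_pow_two_pow (hc _), ← pow_mul, pow_succ, mul_comm]
      _ = _ := by rw [prod_range_succ, mul_assoc]

lemma prod_range_le_of_hasProd {f : ℕ → ℝ} {p : ℝ} (hf : ∀ k, 1 ≤ f k) (h : HasProd f p)
    (n : ℕ) : ∏ k ∈ range n, f k ≤ p := by
  refine (monotone_nat_of_le_succ fun n => ?_).ge_of_tendsto h.tendsto_prod_nat n
  rw [prod_range_succ]
  exact le_mul_of_one_le_right (prod_nonneg fun k _ => zero_le_one.trans (hf k)) (hf n)

lemma tsum_le_two_mul_of_le_pow_two_pow {a : ℕ → ℝ} {x : ℝ} (ha : ∀ m, 0 ≤ a m) (hx : x ≤ 2⁻¹)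
    (h : ∀ m, a m ≤ x ^ 2 ^ m) : ∑' m, a m ≤ 2 * x := by
  have hx₀ : 0 ≤ x := by simpa using (ha 0).trans (h 0)
  have hgeom : ∀ m, a m ≤ x * 2⁻¹ ^ m := fun m => calc
    a m ≤ x ^ 2 ^ m := h m
    _ ≤ x ^ (m + 1) := pow_le_pow_of_le_one hx₀ (by linarith) Nat.lt_two_pow_self
    _ ≤ x * 2⁻¹ ^ m := by rw [pow_succ']; gcongr
  have hsum : Summable fun m : ℕ => x * 2⁻¹ ^ m :=
    (summable_geometric_of_lt_one (by norm_num) (by norm_num)).mul_left x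
  calc ∑' m, a m ≤ ∑' m : ℕ, x * 2⁻¹ ^ m :=
        (hsum.of_nonneg_of_le ha hgeom).tsum_le_tsum hgeom hsum
    _ = 2 * x := by rw [tsum_mul_left, tsum_geometric_inv_two]; ring

lemma summable_log_geometric_rpow_two_rpow_neg {c₀ r : ℝ} (hc₀ : 0 < c₀) (hr : 0 < r) :
    Summable fun k : ℕ => log ((c₀ * r ^ k) ^ (2 : ℝ) ^ (-(k : ℝ))) := by
  have hgeom := summable_geometric_two.mul_left (log c₀)
  have harith := (summable_pow_mul_geometric_of_norm_lt_one 1 (r := (2 : ℝ)⁻¹)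
    (by norm_num)).mul_left (log r)
  refine (hgeom.add harith).congr fun k => ?_
  rw [log_rpow (by positivity), log_mul hc₀.ne' (by positivity), log_pow, rpow_neg two_pos.le,
    rpow_natCast]
  simp only [one_div, inv_pow, pow_one]
  ring

lemma rpow_neg_mul_two_rpow_neg {x : ℝ} (hx : 0 ≤ x) (τ : ℝ) (k : ℕ) :
    (x * 2 ^ (-(k : ℝ))) ^ (-τ) = x ^ (-τ) * (2 ^ τ) ^ k := by
  rw [mul_rpow hx (by positivity), ← rpow_mul two_pos.le, ← rpow_natCast, ← rpow_mul two_pos.le]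
  ring_nf

theorem stmt_8_general (C τ σ η : ℝ) (hτ : 1 ≤ τ) (hσ0 : 0 < σ)
    (σs : ℕ → ℝ) (hσs : ∀ m, σs m = (σ / 6) * (2 : ℝ) ^ (-(m : ℝ)))
    (c : ℕ → ℝ) (hc : ∀ m, c m = 2⁻¹ * C * (σs m) ^ (-τ)) (hc1 : ∀ m, 1 ≤ c m)
    (a : ℕ → ℝ) (ha0 : ∀ m, 0 ≤ a m)
    (hrec : ∀ m, a (m + 1) ≤ c m * (a m) ^ 2)
    (P : ℝ) (hP : P = ∏' k : ℕ, (c k) ^ ((2 : ℝ) ^ (-(k : ℝ))))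
    (ε : ℝ) (hε : ε = (η / 2) * ∏' k : ℕ, (c k) ^ (-((2 : ℝ) ^ (-(k : ℝ)))))
    (ha1 : a 0 ≤ c 0 * ε) (hsmall : 2 * ε * P ≤ 1) :
    (∀ m, a m ≤ (ε * P) ^ (2 ^ m)) ∧ (∑' m : ℕ, a m) ≤ η := by
  have hcpos k : 0 < c k := zero_lt_one.trans_le (hc1 k)
  have hc_geom k : c k = c 0 * (2 ^ τ) ^ k := by
    simp only [hc, hσs, rpow_neg_mul_two_rpow_neg (by positivity : 0 ≤ σ / 6)]
    ring
  have hc_mono : Monotone c := fun m n hmn => by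
    rw [hc_geom m, hc_geom n]
    gcongr
    exacts [(hcpos 0).le, one_le_rpow one_le_two (by linarith)]
  obtain ⟨S, hS⟩ : Summable fun k : ℕ => log (c k ^ (2 : ℝ) ^ (-(k : ℝ))) := by
    refine (summable_log_geometric_rpow_two_rpow_neg (hcpos 0)
      (rpow_pos_of_pos two_pos τ)).congr fun k => ?_
    rw [← hc_geom]
  have hprod := Real.hasProd_of_hasSum_log (fun k => rpow_pos_of_pos (hcpos k) _) hS
  have hεP : ε * P = η / 2 := by
    simp only [hε, hP, rpow_neg (hcpos _).le, (hprod.inv₀ (exp_ne_zero S)).tprod_eq,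
      hprod.tprod_eq]
    field_simp
  have hε₀ : 0 ≤ ε := nonneg_of_mul_nonneg_right ((ha0 0).trans ha1) (hcpos 0)
  have hbound m : a m ≤ (ε * P) ^ 2 ^ m := by
    refine (le_pow_two_pow_of_le_mul_sq (fun k => (hcpos k).le) hc_mono ha0 hrec ha1 m).trans ?_
    have hQ := prod_range_le_of_hasProd
      (fun k => one_le_rpow (hc1 k) (rpow_pos_of_pos two_pos _).le) hprod (m + 1)
    gcongr
    · exact mul_nonneg hε₀ (prod_nonneg fun k _ => (rpow_pos_of_pos (hcpos k) _).le)
    · rwa [hP, hprod.tprod_eq]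
  exact ⟨hbound, (tsum_le_two_mul_of_le_pow_two_pow ha0 (by linarith) hbound).trans (by linarith)⟩

/-- Newton iteration with quadratic error: if `a_{n+1} ≤ c_n a_n²` with
`c_n = 2⁻¹ C σ_n^{-τ}`, `σ_n = (σ/6) 2^{-n}`, `c_n ≥ 1`, `a_0 ≤ c_0 ε` where
`ε = (η/2) Π c_k^{-2^{-k}}` and `2 ε Π c_k^{2^{-k}} ≤ 1`, then
`a_n ≤ (ε Π c_k^{2^{-k}})^{2ⁿ}` for all `n` and `Σ a_n ≤ η`. -/
theorem stmt_8 (C τ σ η : ℝ) (hC : 2 ≤ C) (hτ : 1 ≤ τ) (hσ0 : 0 < σ) (hσ1 : σ ≤ 1)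
    (hη0 : 0 < η) (hη1 : η ≤ 1)
    (σs : ℕ → ℝ) (hσs : ∀ m, σs m = (σ / 6) * (2 : ℝ) ^ (-(m : ℝ)))
    (c : ℕ → ℝ) (hc : ∀ m, c m = 2⁻¹ * C * (σs m) ^ (-τ)) (hc1 : ∀ m, 1 ≤ c m)
    (a : ℕ → ℝ) (ha0 : ∀ m, 0 ≤ a m)
    (hrec : ∀ m, a (m + 1) ≤ c m * (a m) ^ 2)
    (P : ℝ) (hP : P = ∏' k : ℕ, (c k) ^ ((2 : ℝ) ^ (-(k : ℝ))))
    (ε : ℝ) (hε : ε = (η / 2) * ∏' k : ℕ, (c k) ^ (-((2 : ℝ) ^ (-(k : ℝ)))))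
    (ha1 : a 0 ≤ c 0 * ε) (hsmall : 2 * ε * P ≤ 1) :
    (∀ m, a m ≤ (ε * P) ^ (2 ^ m)) ∧ (∑' m : ℕ, a m) ≤ η :=
  stmt_8_general C τ σ η hτ hσ0 σs hσs c hc hc1 a ha0 hrec P hP ε hε ha1 hsmall
end

section
/- Quantitative inverse function theorem on the torus (injectivity on a smaller strip): let v : 𝕋ⁿ_{s+2σ} → ℂⁿ be continuous, holomorphic in the interior, with sup norm |v|_{s+2σ} < σ. Then the lift Φ = id + v (viewed on ℝⁿ × i[−s−2σ, s+2σ]ⁿ) is injective on ℝⁿ × i[−s−σ, s+σ]ⁿ. -/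
open Metric Set

/-- The closed strip of width `r` in `ℂⁿ` (lift of `𝕋ⁿ_r`). -/
def strip (n : ℕ) (r : ℝ) : Set (Fin n → ℂ) := {z | ∀ j, |(z j).im| ≤ r}

/-- The open strip of width `r` (interior of `strip n r`). -/
def ostrip (n : ℕ) (r : ℝ) : Set (Fin n → ℂ) := {z | ∀ j, |(z j).im| < r}

lemma ostrip_open (n : ℕ) (r : ℝ) : IsOpen (ostrip n r) := by
  have : ostrip n r = ⋂ j, (fun z : Fin n → ℂ => |(z j).im|) ⁻¹' Set.Iio r := by
    ext z; simp [ostrip]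
  rw [this]
  exact isOpen_iInter_of_finite fun j =>
    (isOpen_Iio.preimage (by fun_prop))

lemma strip_convex (n : ℕ) (r : ℝ) : Convex ℝ (strip n r) := by
  intro z hz w hw a b ha hb hab j
  have : ((a • z + b • w) j).im = a * (z j).im + b * (w j).im := by
    simp [Complex.add_im, Complex.smul_im]
  rw [this]
  calc |a * (z j).im + b * (w j).im| ≤ |a * (z j).im| + |b * (w j).im| := abs_add_le _ _
    _ ≤ a * r + b * r := by
        rw [abs_mul, abs_mul, abs_of_nonneg ha, abs_of_nonneg hb]
        gcongr
        exacts [hz j, hw j]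
    _ = r := by rw [← add_mul, hab, one_mul]

/-- Injectivity of the lift `Φ = id + v` on the smaller strip: if `v ∈ 𝒜(𝕋ⁿ_{s+2σ}, ℂⁿ)`
(periodic, continuous on the closed strip, holomorphic inside) with sup norm `< σ`,
then `id + v` is injective on `ℝⁿ × i[-s-σ, s+σ]ⁿ`. -/
theorem stmt_9 (n : ℕ) (s σ : ℝ) (hs : 0 ≤ s) (hσ : 0 < σ)
    (v : (Fin n → ℂ) → (Fin n → ℂ))
    (hv₁ : ContinuousOn v (strip n (s + 2 * σ)))
    (hv₂ : DifferentiableOn ℂ v (ostrip n (s + 2 * σ)))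
    (hper : ∀ (z : Fin n → ℂ) (j : Fin n),
      v (Function.update z j (z j + 2 * Real.pi)) = v z)
    (M : ℝ) (hMσ : M < σ)
    (hM : ∀ z ∈ strip n (s + 2 * σ), ∀ j, ‖v z j‖ ≤ M) :
    Set.InjOn (fun z => z + v z) (strip n (s + σ)) := by
  rcases Nat.eq_zero_or_pos n with hn | hn
  · subst hn
    intro z _ w _ _
    funext j; exact j.elim0
  -- M ≥ 0
  have h0strip : (0 : Fin n → ℂ) ∈ strip n (s + 2 * σ) := by
    intro j; simp; positivity
  have hM0 : 0 ≤ M := le_trans (norm_nonneg _) (hM 0 h0strip ⟨0, hn⟩)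
  have hsub : strip n (s + σ) ⊆ ostrip n (s + 2 * σ) := by
    intro z hz j
    have := hz j
    have : |(z j).im| ≤ s + σ := this
    linarith
  have hopen := ostrip_open n (s + 2 * σ)
  have hdiff : ∀ x ∈ strip n (s + σ), DifferentiableAt ℂ v x := fun x hx =>
    hv₂.differentiableAt (hopen.mem_nhds (hsub hx))
  -- norm bound on members of strip: ‖v z‖ ≤ M
  have hMnorm : ∀ z ∈ strip n (s + 2 * σ), ‖v z‖ ≤ M := by
    intro z hz
    exact (pi_norm_le_iff_of_nonneg hM0).2 (hM z hz)
  -- Cauchy estimate: ‖fderiv ℂ v x‖ ≤ M / σ on strip (s+σ)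
  have hfd : ∀ x ∈ strip n (s + σ), ‖fderiv ℂ v x‖ ≤ M / σ := by
    intro x hx
    apply ContinuousLinearMap.opNorm_le_bound _ (div_nonneg hM0 hσ.le)
    intro u
    rcases eq_or_ne u 0 with rfl | hu
    · simp
    have hun : 0 < ‖u‖ := norm_pos_iff.2 hu
    set R : ℝ := σ / ‖u‖ with hR
    have hRpos : 0 < R := div_pos hσ hun
    set g : ℂ → (Fin n → ℂ) := fun t => v (x + t • u) with hg
    -- points of the closed ball land in the closed strip
    have hmapsc : ∀ t : ℂ, ‖t‖ ≤ R → x + t • u ∈ strip n (s + 2 * σ) := by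
      intro t ht j
      have h1 : |(x j).im| ≤ s + σ := hx j
      have h2 : |((t • u) j).im| ≤ σ := by
        have : ‖(t • u) j‖ ≤ ‖t • u‖ := norm_le_pi_norm _ j
        have h3 : ‖t • u‖ = ‖t‖ * ‖u‖ := norm_smul t u
        have h4 : ‖t‖ * ‖u‖ ≤ R * ‖u‖ := by gcongr
        have h5 : R * ‖u‖ = σ := div_mul_cancel₀ σ hun.ne'
        calc |((t • u) j).im| ≤ ‖(t • u) j‖ := Complex.abs_im_le_norm _
          _ ≤ σ := by rw [h3] at this; linarith
      calc |(x j + (t • u) j).im| = |(x j).im + ((t • u) j).im| := by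
            simp [Complex.add_im]
        _ ≤ |(x j).im| + |((t • u) j).im| := abs_add_le _ _
        _ ≤ s + 2 * σ := by linarith
    have hmapso : ∀ t : ℂ, ‖t‖ < R → x + t • u ∈ ostrip n (s + 2 * σ) := by
      intro t ht j
      have h1 : |(x j).im| ≤ s + σ := hx j
      have h2 : |((t • u) j).im| < σ := by
        have h3 : ‖(t • u) j‖ ≤ ‖t‖ * ‖u‖ := by
          rw [← norm_smul]; exact norm_le_pi_norm _ j
        have h4 : ‖t‖ * ‖u‖ < R * ‖u‖ := by gcongr
        have h5 : R * ‖u‖ = σ := div_mul_cancel₀ σ hun.ne'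
        calc |((t • u) j).im| ≤ ‖(t • u) j‖ := Complex.abs_im_le_norm _
          _ < σ := by rw [← h5]; linarith
      calc |(x j + (t • u) j).im| = |(x j).im + ((t • u) j).im| := by
            simp [Complex.add_im]
        _ ≤ |(x j).im| + |((t • u) j).im| := abs_add_le _ _
        _ < s + 2 * σ := by linarith
    have haff : ∀ t : ℂ, HasDerivAt (fun t : ℂ => x + t • u) u t := by
      intro t
      simpa using HasDerivAt.const_add x (HasDerivAt.smul_const (hasDerivAt_id t) u)
    have hgdc : DiffContOnCl ℂ g (ball (0 : ℂ) R) := by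
      constructor
      · intro t ht
        have h1 : DifferentiableAt ℂ v (x + t • u) :=
          hv₂.differentiableAt (hopen.mem_nhds (hmapso t (by simpa [dist_eq_norm] using ht)))
        exact (h1.comp t (haff t).differentiableAt).differentiableWithinAt
      · rw [closure_ball (0 : ℂ) hRpos.ne']
        apply hv₁.comp
        · exact (Continuous.continuousOn (by fun_prop))
        · intro t ht
          exact hmapsc t (by simpa [dist_eq_norm] using ht)
    have hbound : ∀ t ∈ sphere (0 : ℂ) R, ‖g t‖ ≤ M := by
      intro t ht
      have : ‖t‖ = R := by simpa [dist_eq_norm] using ht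
      exact hMnorm _ (hmapsc t this.le)
    have hcauchy := Complex.norm_deriv_le_of_forall_mem_sphere_norm_le hRpos hgdc hbound
    have hderiv : HasDerivAt g (fderiv ℂ v x u) 0 := by
      have hvd : HasFDerivAt v (fderiv ℂ v x) (x + (0 : ℂ) • u) := by
        simpa using (hdiff x hx).hasFDerivAt
      exact hvd.comp_hasDerivAt (0 : ℂ) (haff 0)
    rw [hderiv.deriv] at hcauchy
    calc ‖fderiv ℂ v x u‖ ≤ M / R := hcauchy
      _ = M / σ * ‖u‖ := by rw [hR]; field_simp
  -- Mean value inequality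
  have hlip : ∀ z ∈ strip n (s + σ), ∀ w ∈ strip n (s + σ),
      ‖v w - v z‖ ≤ M / σ * ‖w - z‖ := fun z hz w hw =>
    (strip_convex n (s + σ)).norm_image_sub_le_of_norm_fderiv_le hdiff hfd hz hw
  intro z hz w hw h
  simp only at h
  have hsub2 : w - z = v z - v w := by
    linear_combination -h
  by_contra hne
  have hwz : 0 < ‖w - z‖ := by
    rw [norm_pos_iff, sub_ne_zero]
    exact fun e => hne (e.symm)
  have h1 : ‖w - z‖ ≤ M / σ * ‖w - z‖ := by
    calc ‖w - z‖ = ‖v z - v w‖ := by rw [hsub2]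
      _ = ‖v w - v z‖ := norm_sub_rev _ _
      _ ≤ M / σ * ‖w - z‖ := hlip z hz w hw
  have h2 : M / σ < 1 := (div_lt_one hσ).2 hMσ
  nlinarith
end

section
/- Two-variable Hadamard interpolation: let 0 < s₀ ≤ s₁, 0 < t₀ ≤ t₁ with log(t₁/t₀) = s₁ − s₀, and for 0 ≤ ρ ≤ 1 set s = (1−ρ)s₀ + ρs₁, t = t₀^{1−ρ} t₁^{ρ}. Then for every f continuous on 𝕋ⁿ_{s₁} × 𝔻ⁿ_{t₁} and holomorphic in the interior, |f|_{s,t} ≤ |f|_{s₀,t₀}^{1−ρ} · |f|_{s₁,t₁}^{ρ}. -/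
/-- The closed domain `𝕋ⁿ_s × 𝔻ⁿ_t` (strip of width `s` times polydisc of radius `t`),
lifted to `ℂⁿ × ℂⁿ`. -/
def dom (n : ℕ) (s t : ℝ) : Set ((Fin n → ℂ) × (Fin n → ℂ)) :=
  {p | (∀ j, |(p.1 j).im| ≤ s) ∧ (∀ j, ‖p.2 j‖ ≤ t)}

/-- The open domain (interior of `dom n s t`). -/
def odom (n : ℕ) (s t : ℝ) : Set ((Fin n → ℂ) × (Fin n → ℂ)) :=
  {p | (∀ j, |(p.1 j).im| < s) ∧ (∀ j, ‖p.2 j‖ < t)}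

/-- The sup norm `|f|_{s,t}` over `𝕋ⁿ_s × 𝔻ⁿ_t`. -/
noncomputable def nrm (n : ℕ) (f : (Fin n → ℂ) × (Fin n → ℂ) → ℂ) (s t : ℝ) : ℝ :=
  sSup ((fun p => ‖f p‖) '' dom n s t)

/-! Put `c = log t₀ - s₀`. The hypothesis on `log (t₁ / t₀)` says `t₀ = e^{s₀ + c}`,
`t₁ = e^{s₁ + c}` and `t = e^{s + c}`, so all three domains belong to the family
`D_σ = 𝕋ⁿ_σ × 𝔻ⁿ_{e^{σ + c}}`. A point `(θ, r) ∈ D_s` is the value at `z = s` of the entire map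
`z ↦ (Re θ + i (Im θ / s) z, r e^{z - s})`, which sends the line `Re z = σ` into `D_σ`. Composing
`f` with it and applying Hadamard's three-lines theorem on the strip `s₀ ≤ Re z ≤ s₁` gives the
bound. Periodicity in `θ` confines `f` on `D_{s₁}` to its values on a compact set, which provides
the boundedness the three-lines theorem needs. -/

open Complex Set Function
open scoped Real

section Periodic

variable {ι G X : Type*} [Fintype ι] [DecidableEq ι] [AddCommGroup G]

theorem apply_add_zsmul_of_forall_update_add {F : (ι → G) → X} {c : G}
    (hF : ∀ θ j, F (update θ j (θ j + c)) = F θ) (k : ι → ℤ) (θ : ι → G) :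
    F (θ + fun j => k j • c) = F θ := by
  have hcoord : ∀ (θ : ι → G) (j : ι) (m : ℤ), F (update θ j (θ j + m • c)) = F θ := by
    intro θ j m
    have hper : Periodic (fun x => F (update θ j x)) c := fun x => by
      simpa using hF (update θ j x) j
    simpa using hper.zsmul m (θ j)
  have hpart : ∀ S : Finset ι, F (S.piecewise (θ + fun j => k j • c) θ) = F θ := by
    intro S
    induction S using Finset.induction_on with
    | empty => simp
    | insert j S hj ih =>
      have hj' := hcoord (S.piecewise (θ + fun j => k j • c) θ) j (k j)
      rw [Finset.piecewise_eq_of_notMem _ _ _ hj] at hj'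
      rw [Finset.piecewise_insert, Pi.add_apply, hj', ih]
  simpa using hpart Finset.univ

end Periodic

variable {n : ℕ} {f : (Fin n → ℂ) × (Fin n → ℂ) → ℂ}

theorem nrm_nonneg (s t : ℝ) : 0 ≤ nrm n f s t :=
  Real.sSup_nonneg (by rintro x ⟨p, -, rfl⟩; exact norm_nonneg _)

theorem norm_le_nrm {s t : ℝ} (hbdd : BddAbove ((fun p => ‖f p‖) '' dom n s t))
    {p : (Fin n → ℂ) × (Fin n → ℂ)} (hp : p ∈ dom n s t) : ‖f p‖ ≤ nrm n f s t :=
  le_csSup hbdd (mem_image_of_mem _ hp)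

theorem nrm_le {s t M : ℝ} (hM : 0 ≤ M) (h : ∀ p ∈ dom n s t, ‖f p‖ ≤ M) :
    nrm n f s t ≤ M :=
  Real.sSup_le (by rintro x ⟨p, hp, rfl⟩; exact h p hp) hM

theorem dom_mono {s t s' t' : ℝ} (hs : s ≤ s') (ht : t ≤ t') : dom n s t ⊆ dom n s' t' :=
  fun _ ⟨h₁, h₂⟩ => ⟨fun j => (h₁ j).trans hs, fun j => (h₂ j).trans ht⟩

theorem dom_subset_odom {s t s' t' : ℝ} (hs : s < s') (ht : t < t') :
    dom n s t ⊆ odom n s' t' :=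
  fun _ ⟨h₁, h₂⟩ => ⟨fun j => (h₁ j).trans_lt hs, fun j => (h₂ j).trans_lt ht⟩

theorem bddAbove_norm_image_dom {s t : ℝ} (hf : ContinuousOn f (dom n s t))
    (hper : ∀ (p : (Fin n → ℂ) × (Fin n → ℂ)) (j : Fin n),
      f (update p.1 j (p.1 j + 2 * π), p.2) = f p) :
    BddAbove ((fun p => ‖f p‖) '' dom n s t) := by
  set K : Set ((Fin n → ℂ) × (Fin n → ℂ)) :=
    (univ.pi fun _ => Icc 0 (2 * π) ×ℂ Icc (-s) s) ×ˢ
      (univ.pi fun _ => Metric.closedBall 0 t)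
  have hK : IsCompact K :=
    (isCompact_univ_pi fun _ => isCompact_Icc.reProdIm isCompact_Icc).prod
      (isCompact_univ_pi fun _ => isCompact_closedBall 0 t)
  have hKdom : K ⊆ dom n s t := fun p ⟨h₁, h₂⟩ =>
    ⟨fun j => abs_le.2 (h₁ j (mem_univ j)).2,
      fun j => mem_closedBall_zero_iff.1 (h₂ j (mem_univ j))⟩
  refine (hK.bddAbove_image (continuous_norm.comp_continuousOn (hf.mono hKdom))).mono ?_
  rintro _ ⟨⟨θ, r⟩, ⟨h₁, h₂⟩, rfl⟩
  have h2π : (0 : ℝ) < 2 * π := by positivity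
  set k : Fin n → ℤ := fun j => -toIcoDiv h2π 0 (θ j).re
  refine ⟨(θ + fun j => k j • (2 * π : ℂ), r), ⟨fun j _ => ⟨?_, ?_⟩, fun j _ => ?_⟩, ?_⟩
  · simpa [k, sub_eq_add_neg, mul_comm] using
      Ico_subset_Icc_self (sub_toIcoDiv_zsmul_mem_Ico h2π 0 (θ j).re)
  · simpa [abs_le] using h₁ j
  · simpa using h₂ j
  · exact congrArg norm
      (apply_add_zsmul_of_forall_update_add (F := fun θ => f (θ, r)) (fun θ j => hper (θ, r) j) k θ)

noncomputable def stripSlice (θ r : Fin n → ℂ) (s : ℝ) (z : ℂ) : (Fin n → ℂ) × (Fin n → ℂ) :=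
  (fun j => (θ j).re + ((θ j).im / s : ℝ) * z * I, fun j => r j * cexp (z - s))

theorem differentiable_stripSlice (θ r : Fin n → ℂ) (s : ℝ) :
    Differentiable ℂ (stripSlice θ r s) :=
  (differentiable_pi.2 fun _ => by fun_prop).prodMk (differentiable_pi.2 fun _ => by fun_prop)

theorem stripSlice_self {s : ℝ} (hs : s ≠ 0) (θ r : Fin n → ℂ) : stripSlice θ r s s = (θ, r) := by
  ext j
  · simp [stripSlice, hs]
  · simp [stripSlice]

theorem stripSlice_mem_dom {θ r : Fin n → ℂ} {s c : ℝ} (hs : 0 < s)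
    (hp : (θ, r) ∈ dom n s (Real.exp (s + c))) {z : ℂ} (hz : 0 ≤ z.re) :
    stripSlice θ r s z ∈ dom n z.re (Real.exp (z.re + c)) := by
  obtain ⟨h₁, h₂⟩ := hp
  refine ⟨fun j => ?_, fun j => ?_⟩
  · have hθ : |(θ j).im / s| ≤ 1 := by rw [abs_div, abs_of_pos hs, div_le_one hs]; exact h₁ j
    simpa [stripSlice, abs_mul, abs_of_nonneg hz] using mul_le_of_le_one_left hz hθ
  · calc ‖r j * cexp (z - s)‖ = ‖r j‖ * Real.exp (z.re - s) := by simp [norm_exp]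
      _ ≤ Real.exp (s + c) * Real.exp (z.re - s) := by gcongr; exact h₂ j
      _ = Real.exp (z.re + c) := by rw [← Real.exp_add]; ring_nf

open Complex.HadamardThreeLines in
theorem nrm_le_interp {s₀ s₁ c ρ : ℝ} (hs₀ : 0 < s₀) (hss : s₀ < s₁) (hρ0 : 0 ≤ ρ) (hρ1 : ρ ≤ 1)
    (hf₁ : ContinuousOn f (dom n s₁ (Real.exp (s₁ + c))))
    (hf₂ : DifferentiableOn ℂ f (odom n s₁ (Real.exp (s₁ + c))))
    (hbdd : BddAbove ((fun p => ‖f p‖) '' dom n s₁ (Real.exp (s₁ + c)))) :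
    nrm n f ((1 - ρ) * s₀ + ρ * s₁) (Real.exp ((1 - ρ) * s₀ + ρ * s₁ + c))
      ≤ nrm n f s₀ (Real.exp (s₀ + c)) ^ (1 - ρ) * nrm n f s₁ (Real.exp (s₁ + c)) ^ ρ := by
  set s := (1 - ρ) * s₀ + ρ * s₁
  have hs : 0 < s := by nlinarith
  refine nrm_le (mul_nonneg (Real.rpow_nonneg (nrm_nonneg _ _) _)
    (Real.rpow_nonneg (nrm_nonneg _ _) _)) fun ⟨θ, r⟩ hp => ?_
  set G : ℂ → ℂ := fun z => f (stripSlice θ r s z)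
  have hmem : ∀ z ∈ verticalClosedStrip s₀ s₁,
      stripSlice θ r s z ∈ dom n s₁ (Real.exp (s₁ + c)) := fun z hz =>
    dom_mono hz.2 (by gcongr; exact hz.2) (stripSlice_mem_dom hs hp (by linarith [hz.1]))
  have hd : DiffContOnCl ℂ G (verticalStrip s₀ s₁) := by
    refine ⟨hf₂.comp (differentiable_stripSlice θ r s).differentiableOn fun z hz => ?_, ?_⟩
    · exact dom_subset_odom hz.2 (by gcongr; exact hz.2)
        (stripSlice_mem_dom hs hp (by linarith [hz.1]))
    · rw [verticalStrip, closure_preimage_re, closure_Ioo hss.ne]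
      exact hf₁.comp (differentiable_stripSlice θ r s).continuous.continuousOn hmem
  have hB : BddAbove ((norm ∘ G) '' verticalClosedStrip s₀ s₁) :=
    hbdd.mono (by rintro _ ⟨z, hz, rfl⟩; exact mem_image_of_mem _ (hmem z hz))
  have hleft : ∀ z ∈ re ⁻¹' {s₀}, ‖G z‖ ≤ nrm n f s₀ (Real.exp (s₀ + c)) := by
    intro z (hz : z.re = s₀)
    refine norm_le_nrm (hbdd.mono (image_mono (dom_mono hss.le (by gcongr)))) ?_
    simpa [hz] using stripSlice_mem_dom hs hp (z := z) (by linarith)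
  have hright : ∀ z ∈ re ⁻¹' {s₁}, ‖G z‖ ≤ nrm n f s₁ (Real.exp (s₁ + c)) :=
    fun z (hz : z.re = s₁) => norm_le_nrm hbdd (hmem z ⟨hz ▸ hss.le, hz.le⟩)
  have hρ : ((s : ℂ).re - s₀) / (s₁ - s₀) = ρ := by
    rw [ofReal_re]; field_simp [(sub_pos.2 hss).ne']; ring
  have key := norm_le_interp_of_mem_verticalClosedStrip' hss
    (z := s) ⟨by simp [s]; nlinarith, by simp [s]; nlinarith⟩ hd hB hleft hright
  rwa [hρ, show G s = f (θ, r) from congrArg f (stripSlice_self hs.ne' θ r)] at key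

/-- Two-variable Hadamard interpolation: with `log(t₁/t₀) = s₁ - s₀`,
`s = (1-ρ)s₀ + ρs₁`, `t = t₀^{1-ρ} t₁^ρ`, one has
`|f|_{s,t} ≤ |f|_{s₀,t₀}^{1-ρ} |f|_{s₁,t₁}^ρ`. -/
theorem stmt_12 (n : ℕ) (s₀ s₁ t₀ t₁ ρ : ℝ)
    (hs₀ : 0 < s₀) (hss : s₀ ≤ s₁) (ht₀ : 0 < t₀) (htt : t₀ ≤ t₁)
    (hlog : Real.log (t₁ / t₀) = s₁ - s₀) (hρ0 : 0 ≤ ρ) (hρ1 : ρ ≤ 1)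
    (f : (Fin n → ℂ) × (Fin n → ℂ) → ℂ)
    (hf₁ : ContinuousOn f (dom n s₁ t₁))
    (hf₂ : DifferentiableOn ℂ f (odom n s₁ t₁))
    (hper : ∀ (p : (Fin n → ℂ) × (Fin n → ℂ)) (j : Fin n),
      f (Function.update p.1 j (p.1 j + 2 * Real.pi), p.2) = f p) :
    nrm n f ((1 - ρ) * s₀ + ρ * s₁) (t₀ ^ (1 - ρ) * t₁ ^ ρ)
      ≤ (nrm n f s₀ t₀) ^ (1 - ρ) * (nrm n f s₁ t₁) ^ ρ := by
  have ht₁ : 0 < t₁ := ht₀.trans_le htt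
  obtain ⟨c, rfl, rfl⟩ : ∃ c, t₀ = Real.exp (s₀ + c) ∧ t₁ = Real.exp (s₁ + c) := by
    rw [Real.log_div ht₁.ne' ht₀.ne'] at hlog
    refine ⟨Real.log t₀ - s₀, ?_, ?_⟩
    · rw [add_sub_cancel, Real.exp_log ht₀]
    · rw [show s₁ + (Real.log t₀ - s₀) = Real.log t₁ by linarith, Real.exp_log ht₁]
  rw [← Real.exp_mul, ← Real.exp_mul, ← Real.exp_add,
    show (s₀ + c) * (1 - ρ) + (s₁ + c) * ρ = (1 - ρ) * s₀ + ρ * s₁ + c by ring]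
  rcases hss.eq_or_lt with rfl | hlt
  · rw [show (1 - ρ) * s₀ + ρ * s₀ = s₀ by ring, ← Real.rpow_add' (nrm_nonneg _ _) (by simp),
      sub_add_cancel, Real.rpow_one]
  · exact nrm_le_interp hs₀ hlt hρ0 hρ1 hf₁ hf₂ (bddAbove_norm_image_dom hf₁ hper)
end

section
/- Hadamard interpolation for Kolmogorov domains: let 0 < s−σ₀ and s+σ₁ ≤ 1 with σ₁ = −log(1 − σ₀/s). Then for every f continuous on T^n_{s+σ₁} := 𝕋ⁿ_{s+σ₁} × 𝔻ⁿ_{s+σ₁} and holomorphic in its interior, |f|_s² ≤ |f|_{s−σ₀} · |f|_{s+σ₁}, where |f|_s denotes the sup norm on T^n_s. -/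
/-!
Fix `p = (x, z) ∈ T_s`. The holomorphic map
`w ↦ (x + i Im x · (σ₀/s)(2w - 1), z · exp (σ₁ (2w - 1)))` sends `p` to itself at `w = 1/2`, the closed
strip `0 ≤ Re w ≤ 1` into `T_{s+σ₁}` and its left edge into `T_{s-σ₀}`: the choice
`σ₁ = -log (1 - σ₀/s)` is exactly `s e^{-σ₁} = s - σ₀`, while `s + σ₁ ≤ 1` gives `s e^{σ₁} ≤ s + σ₁`
and `σ₀ ≤ σ₁`. Hadamard's three lines theorem for `f` along this strip gives
`|f p|² ≤ |f|_{s-σ₀} |f|_{s+σ₁}`. The boundedness of `f` on `T_{s+σ₁}` that the three lines theorem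
needs comes from `2π`-periodicity: every point has a translate in a compact fundamental domain.
-/

/-- The closed Kolmogorov domain `T^n_r = 𝕋ⁿ_r × 𝔻ⁿ_r`, lifted to `ℂⁿ × ℂⁿ`. -/
def kdom (n : ℕ) (r : ℝ) : Set ((Fin n → ℂ) × (Fin n → ℂ)) :=
  {p | (∀ j, |(p.1 j).im| ≤ r) ∧ (∀ j, ‖p.2 j‖ ≤ r)}

def okdom (n : ℕ) (r : ℝ) : Set ((Fin n → ℂ) × (Fin n → ℂ)) :=
  {p | (∀ j, |(p.1 j).im| < r) ∧ (∀ j, ‖p.2 j‖ < r)}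

/-- The sup norm `|f|_r` over `T^n_r`. -/
noncomputable def knrm (n : ℕ) (f : (Fin n → ℂ) × (Fin n → ℂ) → ℂ) (r : ℝ) : ℝ :=
  sSup ((fun p => ‖f p‖) '' kdom n r)

open Complex Set Complex.HadamardThreeLines

lemma mul_exp_le_add_of_add_le_one {s σ : ℝ} (hσ : 0 ≤ σ) (h : s + σ ≤ 1) :
    s * Real.exp σ ≤ s + σ := by
  have h₁ : 0 ≤ Real.exp σ - 1 := sub_nonneg.2 (Real.one_le_exp hσ)
  have h₂ : (1 - σ) * Real.exp σ ≤ 1 := calc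
    (1 - σ) * Real.exp σ ≤ Real.exp (-σ) * Real.exp σ := by
      gcongr; linarith [Real.add_one_le_exp (-σ)]
    _ = 1 := by rw [← Real.exp_add, neg_add_cancel, Real.exp_zero]
  calc s * Real.exp σ = s + s * (Real.exp σ - 1) := by ring
    _ ≤ s + (1 - σ) * (Real.exp σ - 1) := by gcongr; linarith
    _ ≤ s + σ := by linarith

def periodSubgroup {α γ : Type*} [AddGroup α] (g : α → γ) : AddSubgroup α where
  carrier := {v | ∀ x, g (x + v) = g x}
  zero_mem' := by simp
  add_mem' {u v} hu hv x := by rw [← add_assoc, hv, hu]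
  neg_mem' {v} hv x := by rw [← hv (x + -v), neg_add_cancel_right]

lemma exists_re_mem_Ico_of_single_mem_periodSubgroup {n : ℕ} {γ : Type*}
    {g : (Fin n → ℂ) → γ} (hg : ∀ j, Pi.single j (2 * Real.pi : ℂ) ∈ periodSubgroup g)
    (x : Fin n → ℂ) :
    ∃ y, g y = g x ∧ ∀ j, (y j).im = (x j).im ∧ (y j).re ∈ Ico 0 (2 * Real.pi) := by
  set v : Fin n → ℂ := fun j => ((toIcoDiv Real.two_pi_pos 0 (x j).re • (2 * Real.pi) : ℝ) : ℂ)
  have hv : v ∈ periodSubgroup g := by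
    rw [← Finset.univ_sum_single v]
    refine sum_mem fun j _ => ?_
    rw [show v j = toIcoDiv Real.two_pi_pos 0 (x j).re • (2 * Real.pi : ℂ) by simp [v],
      Pi.single_zsmul]
    exact zsmul_mem (hg j) _
  refine ⟨x + -v, neg_mem hv x, fun j => ⟨by simp [v], ?_⟩⟩
  have := toIcoMod_mem_Ico Real.two_pi_pos 0 (x j).re
  rw [← self_sub_toIcoDiv_zsmul, zero_add] at this
  simpa [v, sub_eq_add_neg] using this

lemma bddAbove_norm_image_kdom {n : ℕ} {r : ℝ} {f : (Fin n → ℂ) × (Fin n → ℂ) → ℂ}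
    (hf : ContinuousOn f (kdom n r))
    (hper : ∀ (p : (Fin n → ℂ) × (Fin n → ℂ)) (j : Fin n),
      f (Function.update p.1 j (p.1 j + 2 * Real.pi), p.2) = f p) :
    BddAbove ((fun p => ‖f p‖) '' kdom n r) := by
  set K := (univ.pi fun _ : Fin n => reProdIm (Icc 0 (2 * Real.pi)) (Icc (-r) r)) ×ˢ
    (univ.pi fun _ : Fin n => Metric.closedBall (0 : ℂ) r)
  have hKc : IsCompact K := (isCompact_univ_pi fun _ => isCompact_Icc.reProdIm isCompact_Icc).prod
    (isCompact_univ_pi fun _ => isCompact_closedBall _ _)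
  have hK : K ⊆ kdom n r := fun p hp =>
    ⟨fun j => abs_le.2 (hp.1 j trivial).2, fun j => by simpa using hp.2 j trivial⟩
  refine (hKc.bddAbove_image (hf.mono hK).norm).mono ?_
  rintro _ ⟨p, hp, rfl⟩
  have hg (j : Fin n) : Pi.single j (2 * Real.pi : ℂ) ∈ periodSubgroup (fun x => f (x, p.2)) := by
    intro x
    convert hper (x, p.2) j using 3
    ext i
    rcases eq_or_ne i j with rfl | h <;> simp [*]
  obtain ⟨y, hy, hyK⟩ := exists_re_mem_Ico_of_single_mem_periodSubgroup hg p.1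
  refine ⟨(y, p.2), ⟨fun j _ => ⟨Ico_subset_Icc_self (hyK j).2, ?_⟩, fun j _ => ?_⟩, by simp [hy]⟩
  · rw [mem_preimage, (hyK j).1]; exact abs_le.1 (hp.1 j)
  · simpa using hp.2 j

section Kolmogorov

variable {n : ℕ} {f : (Fin n → ℂ) × (Fin n → ℂ) → ℂ} {r s : ℝ}

lemma kdom_mono (h : r ≤ s) : kdom n r ⊆ kdom n s :=
  fun _ hp => ⟨fun j => (hp.1 j).trans h, fun j => (hp.2 j).trans h⟩

lemma norm_le_knrm (hf : BddAbove ((fun p => ‖f p‖) '' kdom n r))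
    {p : (Fin n → ℂ) × (Fin n → ℂ)} (hp : p ∈ kdom n r) : ‖f p‖ ≤ knrm n f r :=
  le_csSup hf (mem_image_of_mem _ hp)

lemma knrm_nonneg : 0 ≤ knrm n f r :=
  Real.sSup_nonneg <| forall_mem_image.2 fun _ _ => norm_nonneg _

lemma knrm_le {M : ℝ} (hM : 0 ≤ M) (h : ∀ p ∈ kdom n r, ‖f p‖ ≤ M) : knrm n f r ≤ M :=
  Real.sSup_le (forall_mem_image.2 h) hM

end Kolmogorov

theorem norm_apply_half_le_sqrt_mul {E F : Type*} [NormedAddCommGroup E] [NormedSpace ℂ E]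
    [NormedAddCommGroup F] [NormedSpace ℂ F] {f : E → F} {W : ℂ → E} {K U : Set E} {A B : ℝ}
    (hW : Differentiable ℂ W) (hfK : ContinuousOn f K) (hfU : DifferentiableOn ℂ f U)
    (hWK : MapsTo W (verticalClosedStrip 0 1) K) (hWU : MapsTo W (verticalStrip 0 1) U)
    (hbdd : BddAbove ((fun x => ‖f x‖) '' K))
    (hA : ∀ w : ℂ, w.re = 0 → ‖f (W w)‖ ≤ A) (hB : ∀ w : ℂ, w.re = 1 → ‖f (W w)‖ ≤ B) :
    ‖f (W (1 / 2))‖ ≤ √(A * B) := by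
  have hclosure : closure (verticalStrip 0 1) = verticalClosedStrip 0 1 := by
    rw [verticalStrip, closure_preimage_re, closure_Ioo zero_ne_one]; rfl
  have hd : DiffContOnCl ℂ (f ∘ W) (verticalStrip 0 1) :=
    ⟨hfU.comp hW.differentiableOn hWU, hclosure ▸ hfK.comp hW.continuous.continuousOn hWK⟩
  have hbdd' : BddAbove ((norm ∘ (f ∘ W)) '' verticalClosedStrip 0 1) := by
    refine hbdd.mono ?_
    rintro _ ⟨w, hw, rfl⟩
    exact ⟨W w, hWK hw, rfl⟩
  have hA₀ : 0 ≤ A := (norm_nonneg _).trans (hA 0 rfl)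
  have hhalf : (1 / 2 : ℂ) ∈ verticalClosedStrip 0 1 := by
    norm_num [verticalClosedStrip]
  have := norm_le_interp_of_mem_verticalClosedStrip₀₁' (f ∘ W) hhalf hd hbdd'
    hA hB
  rw [Real.sqrt_eq_rpow, Real.mul_rpow hA₀ ((norm_nonneg _).trans (hB 1 rfl))]
  convert this using 3 <;> norm_num

section StripMap

variable {n : ℕ} (a b : ℝ) (p : (Fin n → ℂ) × (Fin n → ℂ))

noncomputable def stripMap (w : ℂ) : (Fin n → ℂ) × (Fin n → ℂ) :=
  (fun j => p.1 j + I * (p.1 j).im * (a * (2 * w - 1)), fun j => p.2 j * exp (b * (2 * w - 1)))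

lemma stripMap_half : stripMap a b p (1 / 2) = p := by
  simp [stripMap]

lemma differentiable_stripMap : Differentiable ℂ (stripMap a b p) :=
  (differentiable_pi.2 fun _ => by fun_prop).prodMk (differentiable_pi.2 fun _ => by fun_prop)

lemma im_stripMap_fst (w : ℂ) (j : Fin n) :
    ((stripMap a b p w).1 j).im = (p.1 j).im * (1 + a * (2 * w.re - 1)) := by
  simp only [stripMap, add_im, mul_im, mul_re, I_re, ofReal_re, zero_mul, I_im, ofReal_im,
    mul_zero, sub_self, sub_im, re_ofNat, im_ofNat, add_zero, one_im, sub_zero, sub_re, one_re,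
    one_mul, zero_add]
  ring

lemma norm_stripMap_snd (w : ℂ) (j : Fin n) :
    ‖(stripMap a b p w).2 j‖ = ‖p.2 j‖ * Real.exp (b * (2 * w.re - 1)) := by
  simp [stripMap, norm_exp]

variable {a b p} {s r : ℝ} {w : ℂ}

lemma stripMap_mem_kdom (hp : p ∈ kdom n s) (ha : 0 ≤ 1 + a * (2 * w.re - 1))
    (h₁ : s * (1 + a * (2 * w.re - 1)) ≤ r) (h₂ : s * Real.exp (b * (2 * w.re - 1)) ≤ r) :
    stripMap a b p w ∈ kdom n r := by
  refine ⟨fun j => ?_, fun j => ?_⟩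
  · rw [im_stripMap_fst, abs_mul, abs_of_nonneg ha]
    exact (mul_le_mul_of_nonneg_right (hp.1 j) ha).trans h₁
  · rw [norm_stripMap_snd]
    exact (mul_le_mul_of_nonneg_right (hp.2 j) (Real.exp_pos _).le).trans h₂

lemma stripMap_mem_okdom (hp : p ∈ kdom n s) (ha : 0 ≤ 1 + a * (2 * w.re - 1))
    (h₁ : s * (1 + a * (2 * w.re - 1)) < r) (h₂ : s * Real.exp (b * (2 * w.re - 1)) < r) :
    stripMap a b p w ∈ okdom n r := by
  refine ⟨fun j => ?_, fun j => ?_⟩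
  · rw [im_stripMap_fst, abs_mul, abs_of_nonneg ha]
    exact (mul_le_mul_of_nonneg_right (hp.1 j) ha).trans_lt h₁
  · rw [norm_stripMap_snd]
    exact (mul_le_mul_of_nonneg_right (hp.2 j) (Real.exp_pos _).le).trans_lt h₂

end StripMap

lemma norm_le_sqrt_knrm_mul_knrm {n : ℕ} {f : (Fin n → ℂ) × (Fin n → ℂ) → ℂ} {s σ₀ σ₁ : ℝ}
    (hσ₀ : 0 < σ₀) (hσ₀s : σ₀ < s) (hσ₀σ₁ : σ₀ ≤ σ₁)
    (hexp_neg : s * Real.exp (-σ₁) = s - σ₀) (hexp : s * Real.exp σ₁ ≤ s + σ₁)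
    (hf₁ : ContinuousOn f (kdom n (s + σ₁))) (hf₂ : DifferentiableOn ℂ f (okdom n (s + σ₁)))
    (hbdd : BddAbove ((fun p => ‖f p‖) '' kdom n (s + σ₁)))
    {p : (Fin n → ℂ) × (Fin n → ℂ)} (hp : p ∈ kdom n s) :
    ‖f p‖ ≤ √(knrm n f (s - σ₀) * knrm n f (s + σ₁)) := by
  have hs : 0 < s := hσ₀.trans hσ₀s
  have hσ₁ : 0 < σ₁ := hσ₀.trans_le hσ₀σ₁
  set a := σ₀ / s
  have hsa : s * a = σ₀ := mul_div_cancel₀ _ hs.ne'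
  have ha : a < 1 := (div_lt_one hs).2 hσ₀s
  have ha₀ : 0 < a := div_pos hσ₀ hs
  have hscale (t : ℝ) (ht : 0 ≤ t) : 0 ≤ 1 + a * (2 * t - 1) := by nlinarith
  have hclosed : MapsTo (stripMap a σ₁ p) (verticalClosedStrip 0 1) (kdom n (s + σ₁)) :=
    fun w ⟨hw₀, hw₁⟩ => stripMap_mem_kdom hp (hscale _ hw₀) (by nlinarith) <|
      (mul_le_mul_of_nonneg_left (Real.exp_le_exp.2 (by nlinarith)) hs.le).trans hexp
  have hopen : MapsTo (stripMap a σ₁ p) (verticalStrip 0 1) (okdom n (s + σ₁)) :=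
    fun w ⟨hw₀, hw₁⟩ => stripMap_mem_okdom hp (hscale _ hw₀.le) (by nlinarith) <|
      (mul_lt_mul_of_pos_left (Real.exp_lt_exp.2 (by nlinarith)) hs).trans_le hexp
  have hleft (w : ℂ) (hw : w.re = 0) : stripMap a σ₁ p w ∈ kdom n (s - σ₀) :=
    stripMap_mem_kdom hp (hscale _ hw.ge) (by rw [hw]; linarith) (by rw [hw, ← hexp_neg]; norm_num)
  rw [← stripMap_half a σ₁ p]
  exact norm_apply_half_le_sqrt_mul (differentiable_stripMap a σ₁ p) hf₁ hf₂ hclosed hopen hbdd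
    (fun w hw => norm_le_knrm (hbdd.mono (image_mono (kdom_mono (by linarith)))) (hleft w hw))
    (fun w hw => norm_le_knrm hbdd (hclosed (by simp [verticalClosedStrip, hw])))

/-- Hadamard interpolation for Kolmogorov domains: if `σ₁ = -log(1 - σ₀/s)`,
`0 < s - σ₀`, `s + σ₁ ≤ 1`, then `|f|_s² ≤ |f|_{s-σ₀}·|f|_{s+σ₁}` for every
`f ∈ 𝒜(T^n_{s+σ₁})`. -/
theorem stmt_13 (n : ℕ) (s σ₀ σ₁ : ℝ)
    (hσ₀ : 0 < σ₀) (hσ₀s : σ₀ < s) (hs1 : s + σ₁ ≤ 1)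
    (hσ₁ : σ₁ = -Real.log (1 - σ₀ / s))
    (f : (Fin n → ℂ) × (Fin n → ℂ) → ℂ)
    (hf₁ : ContinuousOn f (kdom n (s + σ₁)))
    (hf₂ : DifferentiableOn ℂ f (okdom n (s + σ₁)))
    (hper : ∀ (p : (Fin n → ℂ) × (Fin n → ℂ)) (j : Fin n),
      f (Function.update p.1 j (p.1 j + 2 * Real.pi), p.2) = f p) :
    (knrm n f s) ^ 2 ≤ knrm n f (s - σ₀) * knrm n f (s + σ₁) := by
  have hs : 0 < s := hσ₀.trans hσ₀s
  have hu : 0 < 1 - σ₀ / s := sub_pos.2 ((div_lt_one hs).2 hσ₀s)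
  have hratio : σ₀ / s ≤ σ₁ := by rw [hσ₁]; linarith [Real.log_le_sub_one_of_pos hu]
  have hσ₁pos : 0 < σ₁ := (div_pos hσ₀ hs).trans_le hratio
  have hexp_neg : s * Real.exp (-σ₁) = s - σ₀ := by
    rw [hσ₁, neg_neg, Real.exp_log hu, mul_sub, mul_div_cancel₀ _ hs.ne', mul_one]
  have hbound : knrm n f s ≤ √(knrm n f (s - σ₀) * knrm n f (s + σ₁)) :=
    knrm_le (Real.sqrt_nonneg _) fun p hp =>
      norm_le_sqrt_knrm_mul_knrm hσ₀ hσ₀s ((le_div_self hσ₀.le hs (by linarith)).trans hratio)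
        hexp_neg (mul_exp_le_add_of_add_le_one hσ₁pos.le hs1) hf₁ hf₂
        (bddAbove_norm_image_kdom hf₁ hper) hp
  exact (Real.le_sqrt knrm_nonneg (mul_nonneg knrm_nonneg knrm_nonneg)).1 hbound
end

section
/- Lipschitz bound for a right inverse: let E, F be Banach spaces, φ : U ⊆ E → F be C² with φ(0) = 0; suppose φ'(x) has a left inverse A(x) with ‖A(x)η‖ ≤ K‖η‖ for all x ∈ U, and ‖φ''(z)ξ²‖ ≤ M‖ξ‖². If x, x̂ ∈ U lie in a ball of radius r with KMr ≤ 1, then ‖x̂ − x‖ ≤ 2K‖φ(x̂) − φ(x)‖. In particular φ is injective on such a ball. -/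
/-!
Taylor's formula along the segment from `x` to `y` gives
`‖φ y - φ x - φ'(x)(y - x)‖ ≤ M‖y - x‖²/2`, and the left inverse gives
`‖y - x‖ ≤ K‖φ'(x)(y - x)‖`. Combining the two, the quadratic error contributes at most
`KM‖y - x‖²/2 ≤ ‖y - x‖/2`, which is absorbed into the left-hand side.
-/

open Set

theorem norm_sub_sub_smul_deriv_le_of_norm_deriv2_le {F : Type*} [NormedAddCommGroup F]
    [NormedSpace ℝ F] {g g' g'' : ℝ → F} {a b C : ℝ} (hab : a ≤ b)
    (hg : ∀ t ∈ Icc a b, HasDerivAt g (g' t) t) (hg' : ∀ t ∈ Icc a b, HasDerivAt g' (g'' t) t)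
    (hC : ∀ t ∈ Icc a b, ‖g'' t‖ ≤ C) :
    ‖g b - g a - (b - a) • g' a‖ ≤ C * (b - a) ^ 2 / 2 := by
  have hg'_lip : ∀ t ∈ Icc a b, ‖g' t - g' a‖ ≤ C * (t - a) :=
    norm_image_sub_le_of_norm_deriv_le_segment' (fun t ht => (hg' t ht).hasDerivWithinAt)
      fun t ht => hC t (Ico_subset_Icc_self ht)
  have hrem : ∀ t ∈ Ico a b, HasDerivWithinAt (fun s => g s - g a - (s - a) • g' a)
      (g' t - g' a) (Ici t) t := by
    intro t ht
    have := ((hg t (Ico_subset_Icc_self ht)).sub_const (g a)).sub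
      (((hasDerivAt_id t).sub_const a).smul_const (g' a))
    rw [one_smul] at this
    exact this.hasDerivWithinAt
  have hquad : ∀ t, HasDerivAt (fun s => C * (s - a) ^ 2 / 2) (C * (t - a)) t := fun t =>
    (((hasDerivAt_id' t).sub_const a).fun_pow 2).const_mul C |>.div_const 2 |>.congr_deriv
      (by ring)
  exact image_norm_le_of_norm_deriv_right_le_deriv_boundary
    (f := fun s => g s - g a - (s - a) • g' a)
    (fun t ht => ((hg t ht).continuousAt.sub continuousAt_const |>.sub
      (by fun_prop)).continuousWithinAt)
    hrem (by simp) hquad (fun t ht => hg'_lip t (Ico_subset_Icc_self ht))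
    (right_mem_Icc.mpr hab)

theorem norm_sub_sub_fderiv_le_of_norm_fderiv_fderiv_apply_self_le {E F : Type*}
    [NormedAddCommGroup E] [NormedSpace ℝ E] [NormedAddCommGroup F] [NormedSpace ℝ F]
    {U : Set E} (hU : IsOpen U) (hUconv : Convex ℝ U) {φ : E → F} (hφ : ContDiffOn ℝ 2 φ U)
    {M : ℝ} (hM : ∀ z ∈ U, ∀ ξ : E, ‖fderiv ℝ (fderiv ℝ φ) z ξ ξ‖ ≤ M * ‖ξ‖ ^ 2)
    {x y : E} (hx : x ∈ U) (hy : y ∈ U) :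
    ‖φ y - φ x - fderiv ℝ φ x (y - x)‖ ≤ M * ‖y - x‖ ^ 2 / 2 := by
  set v := y - x
  have hseg : ∀ t ∈ Icc (0 : ℝ) 1, x + t • v ∈ U := fun t ht =>
    hUconv.add_smul_sub_mem hx hy ht
  have hline : ∀ t : ℝ, HasDerivAt (fun s : ℝ => x + s • v) v t := fun t => by
    simpa using ((hasDerivAt_id t).smul_const v).const_add x
  have hφ' : DifferentiableOn ℝ φ U := hφ.differentiableOn two_ne_zero
  have hφ'' : DifferentiableOn ℝ (fderiv ℝ φ) U :=
    ((contDiffOn_succ_iff_fderiv_of_isOpen (n := 1) hU).1 hφ).2.2.differentiableOn one_ne_zero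
  have hg : ∀ t ∈ Icc (0 : ℝ) 1,
      HasDerivAt (fun s => φ (x + s • v)) (fderiv ℝ φ (x + t • v) v) t := fun t ht =>
    (hφ'.differentiableAt (hU.mem_nhds (hseg t ht))).hasFDerivAt.comp_hasDerivAt t (hline t)
  have hg' : ∀ t ∈ Icc (0 : ℝ) 1, HasDerivAt (fun s => fderiv ℝ φ (x + s • v) v)
      (fderiv ℝ (fderiv ℝ φ) (x + t • v) v v) t := fun t ht => by
    have hcurve : HasDerivAt (fun s : ℝ => fderiv ℝ φ (x + s • v))
        (fderiv ℝ (fderiv ℝ φ) (x + t • v) v) t :=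
      (hφ''.differentiableAt (hU.mem_nhds (hseg t ht))).hasFDerivAt.comp_hasDerivAt t (hline t)
    simpa using hcurve.clm_apply (hasDerivAt_const t v)
  have := norm_sub_sub_smul_deriv_le_of_norm_deriv2_le zero_le_one hg hg'
    fun t ht => hM _ (hseg t ht) v
  simpa [v] using this

theorem le_two_mul_of_le_mul_of_le_add_sq {a b c K M : ℝ} (ha : 0 ≤ a) (hK : 0 ≤ K)
    (hab : a ≤ K * b) (hbc : b ≤ c + M * a ^ 2 / 2) (hKMa : K * M * a ≤ 1) :
    a ≤ 2 * K * c := by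
  nlinarith [mul_le_mul_of_nonneg_left hbc hK, mul_le_mul_of_nonneg_right hKMa ha]

theorem stmt_16_general {E F : Type*} [NormedAddCommGroup E] [NormedSpace ℝ E]
    [NormedAddCommGroup F] [NormedSpace ℝ F]
    (U : Set E) (hU : IsOpen U) (hUconv : Convex ℝ U)
    (φ : E → F) (hφ : ContDiffOn ℝ 2 φ U)
    (A : E → F →L[ℝ] E) (K M r : ℝ) (hK : 0 ≤ K)
    (hA : ∀ x ∈ U, ∀ ξ : E, A x (fderiv ℝ φ x ξ) = ξ)
    (hAK : ∀ x ∈ U, ∀ η : F, ‖A x η‖ ≤ K * ‖η‖)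
    (hM : ∀ z ∈ U, ∀ ξ : E, ‖fderiv ℝ (fderiv ℝ φ) z ξ ξ‖ ≤ M * ‖ξ‖ ^ 2)
    (hKMr : K * M * r ≤ 1)
    (x y : E) (hx : x ∈ U) (hy : y ∈ U) (hxy : ‖y - x‖ ≤ r) :
    ‖y - x‖ ≤ 2 * K * ‖φ y - φ x‖ ∧ (φ y = φ x → y = x) := by
  have hinv : ‖y - x‖ ≤ K * ‖fderiv ℝ φ x (y - x)‖ := by
    simpa only [hA x hx] using hAK x hx (fderiv ℝ φ x (y - x))
  have hlin : ‖fderiv ℝ φ x (y - x)‖ ≤ ‖φ y - φ x‖ + M * ‖y - x‖ ^ 2 / 2 :=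
    (norm_le_norm_add_norm_sub _ _).trans <| add_le_add_right
      (norm_sub_sub_fderiv_le_of_norm_fderiv_fderiv_apply_self_le hU hUconv hφ hM hx hy) _
  have hKM : K * M * ‖y - x‖ ≤ 1 := by
    rcases le_total M 0 with hM0 | hM0
    · exact (mul_nonpos_of_nonpos_of_nonneg (mul_nonpos_of_nonneg_of_nonpos hK hM0)
        (norm_nonneg _)).trans zero_le_one
    · exact (mul_le_mul_of_nonneg_left hxy (mul_nonneg hK hM0)).trans hKMr
  have hbound := le_two_mul_of_le_mul_of_le_add_sq (norm_nonneg _) hK hinv hlin hKM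
  refine ⟨hbound, fun hφxy => ?_⟩
  simpa [hφxy, sub_eq_zero] using hbound

/-- Lipschitz bound for a right inverse: if `φ'` has a left inverse `A(x)` with
`‖A(x)η‖ ≤ K‖η‖`, `‖φ''(z)ξ²‖ ≤ M‖ξ‖²` on `U`, and `x, y ∈ U` with `‖y - x‖ ≤ r`
and `K·M·r ≤ 1`, then `‖y - x‖ ≤ 2K‖φ(y) - φ(x)‖`; in particular `φ` is injective
on such a ball. -/
theorem stmt_16 {E F : Type*} [NormedAddCommGroup E] [NormedSpace ℝ E]
    [NormedAddCommGroup F] [NormedSpace ℝ F]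
    (U : Set E) (hU : IsOpen U) (hUconv : Convex ℝ U)
    (φ : E → F) (hφ : ContDiffOn ℝ 2 φ U) (hφ0 : φ 0 = 0)
    (A : E → F →L[ℝ] E) (K M r : ℝ) (hK : 0 ≤ K)
    (hA : ∀ x ∈ U, ∀ ξ : E, A x (fderiv ℝ φ x ξ) = ξ)
    (hAK : ∀ x ∈ U, ∀ η : F, ‖A x η‖ ≤ K * ‖η‖)
    (hM : ∀ z ∈ U, ∀ ξ : E, ‖fderiv ℝ (fderiv ℝ φ) z ξ ξ‖ ≤ M * ‖ξ‖ ^ 2)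
    (hKMr : K * M * r ≤ 1)
    (x y : E) (hx : x ∈ U) (hy : y ∈ U) (hxy : ‖y - x‖ ≤ r) :
    ‖y - x‖ ≤ 2 * K * ‖φ y - φ x‖ ∧ (φ y = φ x → y = x) :=
  stmt_16_general U hU hUconv φ hφ A K M r hK hA hAK hM hKMr x y hx hy hxy
end
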